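/- arXiv:2511.07919 — 2 statements merged into one kernel-verified Lean document; each statement's English description precedes it below -/
import Mathlib

section
/- Let r: ℝ^d → ℝ be L-smooth and satisfy the μ-PL condition for maximization: (1/2)‖∇r(z)‖² ≥ μ (r* − r(z)) for all z, where r* = sup r. If v satisfies E[v|z_t] = α ∇r(z_t) and E[‖v − E[v|z_t]‖² | z_t] ≤ σ² ‖∇r(z_t)‖², then with stepsize η = α/(L(α²+σ²)), the update z_{t+1} = z_t + η v satisfies E[r* − r(z_{t+1}) | z_t] ≤ (1 − μα²/(L(α²+σ²))) (r* − r(z_t)). -/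
open MeasureTheory

lemma descent_aux {d : ℕ} (r : EuclideanSpace ℝ (Fin d) → ℝ) (L : ℝ)
    (hdiff : Differentiable ℝ r)
    (hlip : ∀ x y, ‖gradient r x - gradient r y‖ ≤ L * ‖x - y‖)
    (x u : EuclideanSpace ℝ (Fin d)) :
    |r (x + u) - r x - inner ℝ (gradient r x) u| ≤ L / 2 * ‖u‖ ^ 2 := by
  set g := gradient r x with hg
  set h : ℝ → ℝ := fun t => r (x + t • u) - r x - t * inner ℝ g u with hh
  have hderiv : ∀ t : ℝ,
      HasDerivAt h ((inner ℝ (gradient r (x + t • u)) u : ℝ) - inner ℝ g u) t := by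
    intro t
    have hc : HasDerivAt (fun t : ℝ => x + t • u) u t := by
      simpa using ((hasDerivAt_id t).smul_const u).const_add x
    have h1 : HasDerivAt (fun t : ℝ => r (x + t • u))
        ((inner ℝ (gradient r (x + t • u)) u : ℝ)) t := by
      have := ((hdiff (x + t • u)).hasGradientAt.hasFDerivAt).comp_hasDerivAt t hc
      rw [InnerProductSpace.toDual_apply_apply] at this; exact this
    have H := (h1.sub_const (r x)).sub ((hasDerivAt_id t).mul_const (inner ℝ g u : ℝ))
    rw [one_mul] at H; exact H
  have bound : ∀ t ∈ Set.Ico (0:ℝ) 1,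
      ‖(inner ℝ (gradient r (x + t • u)) u : ℝ) - inner ℝ g u‖ ≤ L * ‖u‖ ^ 2 * t := by
    intro t ht
    have h1 : (inner ℝ (gradient r (x + t • u)) u : ℝ) - inner ℝ g u
        = inner ℝ (gradient r (x + t • u) - g) u := by
      rw [inner_sub_left]
    rw [h1, Real.norm_eq_abs]
    calc |(inner ℝ (gradient r (x + t • u) - g) u : ℝ)|
        ≤ ‖gradient r (x + t • u) - g‖ * ‖u‖ := abs_real_inner_le_norm _ _
      _ ≤ (L * ‖(x + t • u) - x‖) * ‖u‖ := by
          apply mul_le_mul_of_nonneg_right (hlip _ _) (norm_nonneg _)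
      _ = L * ‖u‖ ^ 2 * t := by
          rw [add_sub_cancel_left, norm_smul, Real.norm_eq_abs, abs_of_nonneg ht.1]
          ring
  have key := image_norm_le_of_norm_deriv_right_le_deriv_boundary
    (f := h) (f' := fun t => (inner ℝ (gradient r (x + t • u)) u : ℝ) - inner ℝ g u)
    (a := 0) (b := 1)
    (B := fun t => L * ‖u‖ ^ 2 * t ^ 2 / 2) (B' := fun t => L * ‖u‖ ^ 2 * t)
    (fun t _ => (hderiv t).continuousAt.continuousWithinAt)
    (fun t _ => (hderiv t).hasDerivWithinAt)
    (by simp [hh])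
    (fun t => by
      have : HasDerivAt (fun t : ℝ => L * ‖u‖ ^ 2 * t ^ 2 / 2) (L * ‖u‖ ^ 2 * t) t := by
        have := ((hasDerivAt_pow 2 t).const_mul (L * ‖u‖ ^ 2)).div_const 2
        simpa using this.congr_deriv (by ring)
      exact this)
    bound
  have h1 := key (x := 1) (by norm_num)
  simp only [hh, one_smul, one_mul, Real.norm_eq_abs, one_pow] at h1
  calc |r (x + u) - r x - inner ℝ g u| ≤ L * ‖u‖ ^ 2 * 1 / 2 := h1
    _ = L / 2 * ‖u‖ ^ 2 := by ring

/-- One-step contraction under the PL condition (maximization form) with a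
rationale-guided stochastic direction and stepsize `η = α/(L(α²+σ²))`. -/
theorem stmt_2 {d : ℕ} (r : EuclideanSpace ℝ (Fin d) → ℝ) (L α σ m rstar : ℝ)
    (hdiff : Differentiable ℝ r)
    (hlip : ∀ x y, ‖gradient r x - gradient r y‖ ≤ L * ‖x - y‖)
    (hL : 0 < L) (hm : 0 < m) (hα : 0 < α) (hσ : 0 ≤ σ)
    (hPL : ∀ z, (1 : ℝ) / 2 * ‖gradient r z‖ ^ 2 ≥ m * (rstar - r z))
    {Ω : Type*} [MeasurableSpace Ω] (μ : Measure Ω) [IsProbabilityMeasure μ]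
    (v : Ω → EuclideanSpace ℝ (Fin d)) (z : EuclideanSpace ℝ (Fin d))
    (hv_int : Integrable v μ)
    (hv_sq_int : Integrable (fun ω => ‖v ω‖ ^ 2) μ)
    (hr_int : Integrable (fun ω => r (z + (α / (L * (α ^ 2 + σ ^ 2))) • v ω)) μ)
    (hmean : ∫ ω, v ω ∂μ = α • gradient r z)
    (hvar : ∫ ω, ‖v ω - α • gradient r z‖ ^ 2 ∂μ ≤ σ ^ 2 * ‖gradient r z‖ ^ 2) :
    ∫ ω, (rstar - r (z + (α / (L * (α ^ 2 + σ ^ 2))) • v ω)) ∂μ ≤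
      (1 - m * α ^ 2 / (L * (α ^ 2 + σ ^ 2))) * (rstar - r z) := by
  have descent_aux := descent_aux r L hdiff hlip
  set g := gradient r z with hgdef
  set κ := α ^ 2 + σ ^ 2 with hκdef
  have hκ : 0 < κ := by positivity
  set η := α / (L * κ) with hηdef
  have hη : 0 < η := by positivity
  -- integrability of inner products
  have hinner_int : Integrable (fun ω => (inner ℝ g (v ω) : ℝ)) μ :=
    (innerSL ℝ g).integrable_comp hv_int
  have hint_inner : ∫ ω, (inner ℝ g (v ω) : ℝ) ∂μ = α * ‖g‖ ^ 2 := by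
    rw [integral_inner hv_int, hmean, real_inner_smul_right, real_inner_self_eq_norm_sq]
  -- second moment bound
  have hA : ∫ ω, ‖v ω‖ ^ 2 ∂μ ≤ κ * ‖g‖ ^ 2 := by
    have expand : ∀ ω, ‖v ω - α • g‖ ^ 2
        = ‖v ω‖ ^ 2 - 2 * α * inner ℝ g (v ω) + α ^ 2 * ‖g‖ ^ 2 := by
      intro ω
      rw [@norm_sub_sq_real]
      have h1 : (inner ℝ (v ω) (α • g) : ℝ) = α * inner ℝ g (v ω) := by
        rw [real_inner_smul_right, real_inner_comm]
      have h2 : ‖α • g‖ ^ 2 = α ^ 2 * ‖g‖ ^ 2 := by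
        rw [norm_smul, mul_pow, Real.norm_eq_abs, sq_abs]
      rw [h1, h2]; ring
    have hi1 : Integrable (fun ω => 2 * α * (inner ℝ g (v ω) : ℝ)) μ :=
      hinner_int.const_mul (2 * α)
    have hi2 : Integrable (fun ω => ‖v ω‖ ^ 2 - 2 * α * (inner ℝ g (v ω) : ℝ)) μ :=
      hv_sq_int.sub hi1
    have heq : ∫ ω, ‖v ω - α • g‖ ^ 2 ∂μ
        = (∫ ω, ‖v ω‖ ^ 2 ∂μ) - α ^ 2 * ‖g‖ ^ 2 := by
      calc ∫ ω, ‖v ω - α • g‖ ^ 2 ∂μ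
          = ∫ ω, (‖v ω‖ ^ 2 - 2 * α * inner ℝ g (v ω) + α ^ 2 * ‖g‖ ^ 2) ∂μ :=
            integral_congr_ae (.of_forall expand)
        _ = (∫ ω, ‖v ω‖ ^ 2 ∂μ) - 2 * α * (∫ ω, (inner ℝ g (v ω) : ℝ) ∂μ)
              + α ^ 2 * ‖g‖ ^ 2 := by
            rw [integral_add hi2 (integrable_const _), integral_sub hv_sq_int hi1,
              integral_const, integral_const_mul]
            simp [measure_univ]
        _ = (∫ ω, ‖v ω‖ ^ 2 ∂μ) - α ^ 2 * ‖g‖ ^ 2 := by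
            rw [hint_inner]; ring
    rw [heq] at hvar
    have : σ ^ 2 * ‖g‖ ^ 2 + α ^ 2 * ‖g‖ ^ 2 = κ * ‖g‖ ^ 2 := by rw [hκdef]; ring
    linarith
  -- pointwise descent bound
  have hpt : ∀ ω, rstar - r (z + η • v ω)
      ≤ rstar - r z - η * inner ℝ g (v ω) + L / 2 * η ^ 2 * ‖v ω‖ ^ 2 := by
    intro ω
    have hd := descent_aux z (η • v ω)
    have h1 : (inner ℝ g (η • v ω) : ℝ) = η * inner ℝ g (v ω) := real_inner_smul_right _ _ _
    have h2 : ‖η • v ω‖ ^ 2 = η ^ 2 * ‖v ω‖ ^ 2 := by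
      rw [norm_smul, mul_pow, Real.norm_eq_abs, sq_abs]
    rw [← hgdef] at hd
    rw [h1, h2] at hd
    have := (abs_le.mp hd).1
    nlinarith [this]
  -- RHS integrable
  have hRHS : Integrable
      (fun ω => rstar - r z - η * inner ℝ g (v ω) + L / 2 * η ^ 2 * ‖v ω‖ ^ 2) μ :=
    (((integrable_const (rstar - r z)).sub (hinner_int.const_mul η)).add
      (hv_sq_int.const_mul (L / 2 * η ^ 2)))
  have hLHS : Integrable (fun ω => rstar - r (z + η • v ω)) μ :=
    (integrable_const rstar).sub hr_int
  calc ∫ ω, (rstar - r (z + η • v ω)) ∂μ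
      ≤ ∫ ω, (rstar - r z - η * inner ℝ g (v ω) + L / 2 * η ^ 2 * ‖v ω‖ ^ 2) ∂μ :=
        integral_mono hLHS hRHS hpt
    _ = (rstar - r z) - η * (α * ‖g‖ ^ 2) + L / 2 * η ^ 2 * ∫ ω, ‖v ω‖ ^ 2 ∂μ := by
        have hj1 : Integrable (fun ω => η * (inner ℝ g (v ω) : ℝ)) μ :=
          hinner_int.const_mul η
        have hj2 : Integrable (fun ω => rstar - r z - η * (inner ℝ g (v ω) : ℝ)) μ :=
          (integrable_const (rstar - r z)).sub hj1
        rw [integral_add hj2 (hv_sq_int.const_mul (L / 2 * η ^ 2)),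
          integral_sub (integrable_const (rstar - r z)) hj1,
          integral_const, integral_const_mul, integral_const_mul, hint_inner]
        simp [measure_univ]
    _ ≤ (1 - m * α ^ 2 / (L * κ)) * (rstar - r z) := by
        have hPLz := hPL z
        rw [← hgdef] at hPLz
        set X := rstar - r z with hX
        set G := ‖g‖ ^ 2 with hG
        set c := α ^ 2 / (2 * L * κ) with hc
        have hcpos : (0:ℝ) < c := by rw [hc]; positivity
        have hcoef : η * α - L / 2 * η ^ 2 * κ = c := by
          rw [hc, hηdef]; field_simp; ring
        have h2mc : 2 * m * c = m * α ^ 2 / (L * κ) := by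
          rw [hc]; field_simp
        have hmono : L / 2 * η ^ 2 * (∫ ω, ‖v ω‖ ^ 2 ∂μ) ≤ L / 2 * η ^ 2 * (κ * G) :=
          mul_le_mul_of_nonneg_left hA (by positivity)
        have hGX : 2 * m * X ≤ G := by nlinarith [hPLz]
        calc X - η * (α * G) + L / 2 * η ^ 2 * ∫ ω, ‖v ω‖ ^ 2 ∂μ
            ≤ X - η * (α * G) + L / 2 * η ^ 2 * (κ * G) := by linarith [hmono]
          _ = X - (η * α - L / 2 * η ^ 2 * κ) * G := by ring
          _ = X - c * G := by rw [hcoef]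
          _ ≤ X - c * (2 * m * X) := by
              have := mul_le_mul_of_nonneg_left hGX hcpos.le
              linarith [this]
          _ = (1 - 2 * m * c) * X := by ring
          _ = (1 - m * α ^ 2 / (L * κ)) * X := by rw [h2mc]
end

section
/- Under the setting of the best-of-N sampling proposition, E[r* − r(ẑ)] ≥ (μR²/2) · Γ(1 + 2/d) · (N+2)^{−2/d} for all d ≥ 1 and N ≥ 1. -/
open MeasureTheory Set intervalIntegral


lemma betaAux_integrable (N : ℕ) {b : ℝ} (hb : 0 < b) :
    IntervalIntegrable (fun v => v ^ (b - 1) * (1 - v) ^ N) volume 0 1 := by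
  have hbase : IntervalIntegrable (fun v : ℝ => v ^ (b - 1)) volume 0 1 :=
    intervalIntegral.intervalIntegrable_rpow' (by linarith)
  refine hbase.mono_fun ?_ ?_
  · rw [uIoc_of_le (by norm_num : (0:ℝ) ≤ 1)]
    apply ContinuousOn.aestronglyMeasurable _ measurableSet_Ioc
    exact (continuousOn_id.rpow_const fun x hx => Or.inl (ne_of_gt hx.1)).mul
      ((continuous_const.sub continuous_id).continuousOn.pow N)
  · rw [Filter.EventuallyLE, ae_restrict_iff' measurableSet_uIoc]
    filter_upwards with v hv
    rw [uIoc_of_le (by norm_num : (0:ℝ) ≤ 1)] at hv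
    simp only [Real.norm_eq_abs, abs_mul]
    have h1 : |(1 - v) ^ N| ≤ 1 := by
      rw [abs_pow]
      apply pow_le_one₀ (abs_nonneg _)
      rw [abs_le]; constructor <;> [linarith [hv.2]; linarith [hv.1]]
    calc |v ^ (b-1)| * |(1 - v) ^ N| ≤ |v ^ (b-1)| * 1 :=
          mul_le_mul_of_nonneg_left h1 (abs_nonneg _)
      _ = |v ^ (b-1)| := mul_one _

lemma betaAux : ∀ (N : ℕ) (b : ℝ), 0 < b →
    ∫ v in (0:ℝ)..1, v ^ (b - 1) * (1 - v) ^ N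
      = (N.factorial : ℝ) / ∏ k ∈ Finset.range (N + 1), (b + k) := by
  intro N
  induction N with
  | zero =>
    intro b hb
    simp only [pow_zero, mul_one, Nat.factorial_zero, Finset.range_one, Finset.prod_singleton,
      Nat.cast_zero, add_zero, Nat.cast_one]
    rw [integral_rpow (Or.inl (by linarith))]
    rw [sub_add_cancel, Real.one_rpow, Real.zero_rpow hb.ne']
    norm_num
  | succ N ih =>
    intro b hb
    have key : ∫ v in (0:ℝ)..1, v ^ (b - 1) * (1 - v) ^ (N + 1)
        = (∫ v in (0:ℝ)..1, v ^ (b - 1) * (1 - v) ^ N)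
          - ∫ v in (0:ℝ)..1, v ^ (b + 1 - 1) * (1 - v) ^ N := by
      rw [← intervalIntegral.integral_sub (betaAux_integrable N hb)
        (betaAux_integrable N (by linarith))]
      apply intervalIntegral.integral_congr
      intro v hv
      rw [uIcc_of_le (by norm_num : (0:ℝ) ≤ 1)] at hv
      have hv0 : 0 ≤ v := hv.1
      show v ^ (b - 1) * (1 - v) ^ (N + 1)
        = v ^ (b - 1) * (1 - v) ^ N - v ^ (b + 1 - 1) * (1 - v) ^ N
      rcases eq_or_lt_of_le hv0 with h0 | h0
      · rw [← h0, Real.zero_rpow (show b + 1 - 1 ≠ 0 by linarith)]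
        rcases eq_or_ne b 1 with hb1 | hb1
        · simp [hb1]
        · rw [Real.zero_rpow (by intro h; apply hb1; linarith)]
          ring
      · have hv1 : v ^ (b + 1 - 1) = v ^ (b - 1) * v := by
          rw [show b + 1 - 1 = (b - 1) + 1 by ring, Real.rpow_add h0, Real.rpow_one]
        rw [hv1, pow_succ]
        ring
    rw [key, ih b hb, ih (b + 1) (by linarith)]
    have h1 : (0:ℝ) < ∏ k ∈ Finset.range (N + 1), (b + k) :=
      Finset.prod_pos fun k _ => by positivity
    have h2 : (0:ℝ) < ∏ k ∈ Finset.range (N + 1), (b + 1 + k) :=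
      Finset.prod_pos fun k _ => by positivity
    have e1 : ∏ k ∈ Finset.range (N + 2), (b + k)
        = (∏ k ∈ Finset.range (N + 1), (b + k)) * (b + ((N:ℝ) + 1)) := by
      rw [Finset.prod_range_succ]; push_cast; ring
    have e2 : ∏ k ∈ Finset.range (N + 2), (b + k)
        = (∏ k ∈ Finset.range (N + 1), (b + 1 + k)) * b := by
      rw [Finset.prod_range_succ']
      simp only [Nat.cast_zero, add_zero]
      congr 1
      exact Finset.prod_congr rfl fun k _ => by push_cast; ring
    have h3 : (0:ℝ) < ∏ k ∈ Finset.range (N + 2), (b + k) := by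
      rw [e1]; positivity
    rw [div_sub_div _ _ h1.ne' h2.ne', div_eq_div_iff (by positivity) h3.ne']
    have hfac : ((N+1).factorial : ℝ) = (N.factorial : ℝ) * ((N:ℝ) + 1) := by
      rw [Nat.factorial_succ]; push_cast; ring
    rw [hfac]
    push_cast
    linear_combination ((N.factorial : ℝ) * ∏ k ∈ Finset.range (N + 1), (b + 1 + k)) * e1
      - ((N.factorial : ℝ) * ∏ k ∈ Finset.range (N + 1), (b + k)) * e2


lemma gammaInterp {x s : ℝ} (hx : 0 < x) (hs0 : 0 ≤ s) (hs1 : s ≤ 1) :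
    Real.Gamma (x + s) ≤ Real.Gamma x * x ^ s := by
  have hΓx : 0 < Real.Gamma x := Real.Gamma_pos_of_pos hx
  have hΓxs : 0 < Real.Gamma (x + s) := Real.Gamma_pos_of_pos (by linarith)
  have hconv := Real.convexOn_log_Gamma.2 (mem_Ioi.mpr hx)
    (mem_Ioi.mpr (by linarith : (0:ℝ) < x + 1)) (by linarith : (0:ℝ) ≤ 1 - s) hs0
    (by ring : (1 - s) + s = 1)
  simp only [Function.comp_apply, smul_eq_mul] at hconv
  have he : (1 - s) * x + s * (x + 1) = x + s := by ring
  rw [he] at hconv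
  have hlog : Real.log (Real.Gamma (x + s))
      ≤ Real.log (Real.Gamma x) + s * Real.log x := by
    have hΓ1 : Real.Gamma (x + 1) = x * Real.Gamma x := Real.Gamma_add_one hx.ne'
    rw [hΓ1, Real.log_mul hx.ne' hΓx.ne'] at hconv
    nlinarith [hconv]
  calc Real.Gamma (x + s) = Real.exp (Real.log (Real.Gamma (x + s))) :=
        (Real.exp_log hΓxs).symm
    _ ≤ Real.exp (Real.log (Real.Gamma x) + s * Real.log x) := Real.exp_le_exp.mpr hlog
    _ = Real.Gamma x * x ^ s := by
        rw [Real.exp_add, Real.exp_log hΓx, Real.rpow_def_of_pos hx, mul_comm s]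

lemma gammaProd (a : ℝ) (ha : 0 < a) : ∀ N : ℕ,
    Real.Gamma ((N:ℝ) + 1 + a) = Real.Gamma (1 + a) * ∏ k ∈ Finset.range N, (a + (k + 1)) := by
  intro N
  induction N with
  | zero => simp [add_comm]
  | succ N ih =>
    have h1 : ((N:ℝ) + 1) + 1 + a = ((N:ℝ) + 1 + a) + 1 := by ring
    push_cast
    rw [h1, Real.Gamma_add_one (by positivity : (N:ℝ) + 1 + a ≠ 0), ih,
      Finset.prod_range_succ]
    push_cast
    ring

lemma keyIneq {d : ℕ} (hd : 1 ≤ d) (N : ℕ) :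
    Real.Gamma (1 + 2 / d) * ((N : ℝ) + 2) ^ (-(2 / (d : ℝ)))
      ≤ (N.factorial : ℝ) / ∏ k ∈ Finset.range N, (2 / (d:ℝ) + (k + 1)) := by
  have hd1 : (1:ℝ) ≤ d := by exact_mod_cast hd
  set a : ℝ := 2 / d with ha_def
  have ha : 0 < a := by positivity
  have hP : (0:ℝ) < ∏ k ∈ Finset.range N, (a + (k + 1)) :=
    Finset.prod_pos fun k _ => by positivity
  have hN2 : (0:ℝ) < (N:ℝ) + 2 := by positivity
  have hrpow : (0:ℝ) < ((N:ℝ) + 2) ^ a := Real.rpow_pos_of_pos hN2 a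
  rw [Real.rpow_neg hN2.le]
  have key : Real.Gamma (1 + a) * ∏ k ∈ Finset.range N, (a + (k + 1))
      ≤ (N.factorial : ℝ) * ((N:ℝ) + 2) ^ a := by
    rw [← gammaProd a ha N]
    rcases eq_or_lt_of_le hd1 with hd2 | hd2
    · -- d = 1, a = 2
      have hdd : (d:ℝ) = 1 := hd2.symm
      have ha2 : a = 2 := by rw [ha_def, hdd]; norm_num
      have h3 : ((N:ℝ) + 1 + a) = ((N + 2 : ℕ):ℝ) + 1 := by rw [ha2]; push_cast; ring
      rw [h3, Real.Gamma_nat_eq_factorial]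
      have hfa : ((N+2).factorial : ℝ) = (N.factorial : ℝ) * ((N:ℝ)+1) * ((N:ℝ)+2) := by
        rw [show N + 2 = (N+1)+1 by ring, Nat.factorial_succ, Nat.factorial_succ]
        push_cast; ring
      rw [hfa, ha2]
      have : ((N:ℝ) + 2) ^ (2:ℝ) = ((N:ℝ)+2) * ((N:ℝ)+2) := by
        rw [show (2:ℝ) = ((2:ℕ):ℝ) by norm_num, Real.rpow_natCast]; ring
      rw [this]
      nlinarith [(by exact_mod_cast Nat.factorial_pos N : (0:ℝ) < N.factorial)]
    · -- d ≥ 2 so a ≤ 1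
      have hdd : (2:ℝ) ≤ d := by
        have : (2:ℕ) ≤ d := by exact_mod_cast (by exact_mod_cast hd2 : (1:ℝ) < d)
        exact_mod_cast this
      have ha1 : a ≤ 1 := by rw [ha_def, div_le_one (by linarith)]; linarith
      have hx : (0:ℝ) < (N:ℝ) + 1 := by positivity
      calc Real.Gamma ((N:ℝ) + 1 + a) ≤ Real.Gamma ((N:ℝ) + 1) * ((N:ℝ) + 1) ^ a :=
            gammaInterp hx ha.le ha1
        _ = (N.factorial : ℝ) * ((N:ℝ) + 1) ^ a := by
            rw [show ((N:ℝ) + 1) = ((N:ℕ):ℝ) + 1 by norm_num, Real.Gamma_nat_eq_factorial]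
        _ ≤ (N.factorial : ℝ) * ((N:ℝ) + 2) ^ a := by
            apply mul_le_mul_of_nonneg_left _ (Nat.cast_nonneg _)
            exact Real.rpow_le_rpow hx.le (by linarith) ha.le
  rw [← div_eq_mul_inv, div_le_div_iff₀ hrpow hP]
  exact key


lemma survival {d : ℕ} (hd : 1 ≤ d) (R : ℝ) (hR : 0 < R)
    (zstar : EuclideanSpace ℝ (Fin d))
    (N : ℕ) (hN : 1 ≤ N)
    {Ω : Type*} [MeasurableSpace Ω] (μ : Measure Ω) [IsProbabilityMeasure μ]
    (X : Fin N → Ω → EuclideanSpace ℝ (Fin d))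
    (hmeas : ∀ i, Measurable (X i))
    (hindep : ProbabilityTheory.iIndepFun X μ)
    (hlaw : ∀ i, Measure.map (X i) μ =
      (volume (Metric.closedBall zstar R))⁻¹ •
        volume.restrict (Metric.closedBall zstar R)) :
    ∀ t ∈ Ioc (0:ℝ) (R^2),
      μ {ω | t < ⨅ i, ‖X i ω - zstar‖ ^ 2}
        = ENNReal.ofReal ((1 - (Real.sqrt t / R) ^ d) ^ N) := by
  haveI : Nonempty (Fin N) := ⟨⟨0, hN⟩⟩
  haveI : Nonempty (Fin d) := ⟨⟨0, hd⟩⟩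
  set κ : ℝ := Real.sqrt Real.pi ^ d / Real.Gamma (d / 2 + 1) with hκ_def
  have hκ : 0 < κ := by
    apply div_pos (by positivity)
    apply Real.Gamma_pos_of_pos; positivity
  have hvol : ∀ s : ℝ, 0 ≤ s →
      volume (Metric.closedBall zstar s) = ENNReal.ofReal (s ^ d * κ) := by
    intro s hs
    rw [EuclideanSpace.volume_closedBall, Fintype.card_fin,
      ENNReal.ofReal_mul (by positivity), ENNReal.ofReal_pow hs]
  intro t ht
  have hst : 0 < Real.sqrt t := Real.sqrt_pos.mpr ht.1
  have hstR : Real.sqrt t ≤ R := by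
    calc Real.sqrt t ≤ Real.sqrt (R ^ 2) := Real.sqrt_le_sqrt ht.2
      _ = R := by rw [Real.sqrt_sq hR.le]
  have hq01 : 0 ≤ 1 - (Real.sqrt t / R) ^ d := by
    have : (Real.sqrt t / R) ^ d ≤ 1 := by
      apply pow_le_one₀ (by positivity)
      rw [div_le_one hR]; exact hstR
    linarith
  -- single factor
  have hone : ∀ i : Fin N,
      μ (X i ⁻¹' (Metric.closedBall zstar (Real.sqrt t))ᶜ)
        = ENNReal.ofReal (1 - (Real.sqrt t / R) ^ d) := by
    intro i
    rw [← Measure.map_apply (hmeas i) measurableSet_closedBall.compl, hlaw i,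
      Measure.smul_apply, smul_eq_mul,
      Measure.restrict_apply measurableSet_closedBall.compl]
    have hset : (Metric.closedBall zstar (Real.sqrt t))ᶜ ∩ Metric.closedBall zstar R
        = Metric.closedBall zstar R \ Metric.closedBall zstar (Real.sqrt t) := by
      rw [Set.diff_eq, Set.inter_comm]
    rw [hset, measure_diff (Metric.closedBall_subset_closedBall hstR)
      measurableSet_closedBall.nullMeasurableSet
      (by rw [hvol _ hst.le]; exact ENNReal.ofReal_ne_top),
      hvol _ hst.le, hvol _ hR.le,
      ← ENNReal.ofReal_sub _ (by positivity),
      ← ENNReal.ofReal_inv_of_pos (by positivity),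
      ← ENNReal.ofReal_mul (by positivity)]
    congr 1
    have hRd : (0:ℝ) < R ^ d * κ := by positivity
    field_simp
    rw [mul_sub, mul_one, div_pow, mul_div_assoc', mul_comm (R ^ d) (Real.sqrt t ^ d), mul_div_assoc,
      div_self (by positivity : R ^ d ≠ 0), mul_one]
  -- set identity
  have hset2 : {ω | t < ⨅ i, ‖X i ω - zstar‖ ^ 2}
      = ⋂ i, X i ⁻¹' (Metric.closedBall zstar (Real.sqrt t))ᶜ := by
    ext ω
    simp only [mem_setOf_eq, mem_iInter, mem_preimage, mem_compl_iff,
      Metric.mem_closedBall, not_le, dist_eq_norm]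
    have hiff : ∀ i, (Real.sqrt t < ‖X i ω - zstar‖ ↔ t < ‖X i ω - zstar‖ ^ 2) := by
      intro i
      constructor
      · intro h
        calc t = Real.sqrt t ^ 2 := (Real.sq_sqrt ht.1.le).symm
          _ < ‖X i ω - zstar‖ ^ 2 := by
              apply pow_lt_pow_left₀ h hst.le (by norm_num)
      · intro h
        have h0 : 0 < ‖X i ω - zstar‖ := by
          by_contra hc
          push_neg at hc
          have : ‖X i ω - zstar‖ = 0 := le_antisymm hc (norm_nonneg _)
          rw [this] at h; simp at h; linarith [ht.1]
        exact (Real.sqrt_lt' h0).mpr h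
    constructor
    · intro h i
      rw [hiff i]
      calc t < ⨅ j, ‖X j ω - zstar‖ ^ 2 := h
        _ ≤ ‖X i ω - zstar‖ ^ 2 := ciInf_le (Finite.bddBelow_range _) i
    · intro h
      obtain ⟨j0, hj0⟩ := Finite.exists_min (fun j => ‖X j ω - zstar‖ ^ 2)
      have : (⨅ j, ‖X j ω - zstar‖ ^ 2) = ‖X j0 ω - zstar‖ ^ 2 :=
        le_antisymm (ciInf_le (Finite.bddBelow_range _) j0) (le_ciInf hj0)
      rw [this, ← hiff j0]; exact h j0
  rw [hset2, hindep.meas_iInter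
    (fun i => ⟨(Metric.closedBall zstar (Real.sqrt t))ᶜ,
      measurableSet_closedBall.compl, rfl⟩)]
  rw [Finset.prod_congr rfl (fun i _ => hone i), Finset.prod_const,
    Finset.card_univ, Fintype.card_fin, ← ENNReal.ofReal_pow hq01]



lemma intCompute {d : ℕ} (hd : 1 ≤ d) {R : ℝ} (hR : 0 < R) (N : ℕ) :
    ∫ t in (0:ℝ)..(R^2), (1 - (Real.sqrt t / R) ^ d) ^ N
      = R ^ 2 * ((N.factorial : ℝ) / ∏ k ∈ Finset.range N, (2/(d:ℝ) + (k + 1))) := by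
  have hd1 : (1:ℝ) ≤ d := by exact_mod_cast hd
  have hdpos : (0:ℝ) < d := by linarith
  set a : ℝ := 2 / d with ha_def
  have ha : 0 < a := by positivity
  set h : ℝ → ℝ := fun u => (1 - Real.sqrt u ^ d) ^ N with hh_def
  have hhcont : Continuous h :=
    (continuous_const.sub (Real.continuous_sqrt.pow d)).pow N
  have hhbd : ∀ w : ℝ, w ∈ Icc (0:ℝ) 1 → |h w| ≤ 1 := by
    intro w hw
    simp only [hh_def, abs_pow]
    apply pow_le_one₀ (abs_nonneg _)
    rw [abs_le]
    have h1 : Real.sqrt w ^ d ≤ 1 := by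
      apply pow_le_one₀ (Real.sqrt_nonneg _)
      calc Real.sqrt w ≤ Real.sqrt 1 := Real.sqrt_le_sqrt hw.2
        _ = 1 := Real.sqrt_one
    have h2 : 0 ≤ Real.sqrt w ^ d := by positivity
    constructor <;> linarith
  -- step 1 : rescale t = u * R^2
  have step1 : ∫ t in (0:ℝ)..(R^2), (1 - (Real.sqrt t / R) ^ d) ^ N
      = R ^ 2 * ∫ u in (0:ℝ)..1, h u := by
    have e1 : ((R:ℝ)^2) • (∫ u in (0:ℝ)..1,
          (1 - (Real.sqrt (u * R^2) / R) ^ d) ^ N)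
        = ∫ t in ((0:ℝ)*R^2)..((1:ℝ)*R^2), (1 - (Real.sqrt t / R) ^ d) ^ N :=
      smul_integral_comp_mul_right (fun t => (1 - (Real.sqrt t / R) ^ d) ^ N) (R^2)
    rw [zero_mul, one_mul] at e1
    rw [← e1, smul_eq_mul]
    congr 1
    apply intervalIntegral.integral_congr
    intro u hu
    rw [uIcc_of_le (by norm_num : (0:ℝ) ≤ 1)] at hu
    have heq : Real.sqrt (u * R^2) / R = Real.sqrt u := by
      rw [Real.sqrt_mul hu.1, Real.sqrt_sq hR.le, mul_div_cancel_right₀ _ hR.ne']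
    show (1 - (Real.sqrt (u * R^2) / R) ^ d) ^ N = h u
    rw [heq, hh_def]
  rw [step1]
  congr 1
  -- step 2 : substitution u = x ^ a
  have hfc : ContinuousOn (fun x : ℝ => x ^ (a:ℝ)) (uIcc (0:ℝ) 1) :=
    continuousOn_id.rpow_const fun x _ => Or.inr ha.le
  have himg : (fun x : ℝ => x ^ (a:ℝ)) '' (uIcc (0:ℝ) 1) ⊆ Icc 0 1 := by
    rintro - ⟨x, hx, rfl⟩
    rw [uIcc_of_le (by norm_num : (0:ℝ) ≤ 1)] at hx
    exact ⟨Real.rpow_nonneg hx.1 a, Real.rpow_le_one hx.1 hx.2 ha.le⟩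
  have step2 : ∫ u in (0:ℝ)..1, h u
      = ∫ x in (0:ℝ)..1, (h ∘ fun x : ℝ => x ^ (a:ℝ)) x * (a * x ^ (a - 1)) := by
    rw [intervalIntegral.integral_comp_mul_deriv''' hfc
      (fun x hx => by
        simpa using (Real.hasDerivAt_rpow_const
          (p := a) (Or.inl (by simp at hx; exact ne_of_gt hx.1))).hasDerivWithinAt)
      (hhcont.continuousOn)
      ((hhcont.continuousOn).integrableOn_compact
        (isCompact_uIcc.image_of_continuousOn hfc))
      ?_]
    · rw [Real.zero_rpow ha.ne', Real.one_rpow]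
    · -- integrability of (h ∘ f) * f'
      have hdom : IntegrableOn (fun x : ℝ => a * x ^ (a - 1)) (uIcc (0:ℝ) 1) := by
        rw [Set.uIcc_of_le (by norm_num : (0:ℝ) ≤ 1),
          integrableOn_Icc_iff_integrableOn_Ioc]
        exact (intervalIntegrable_iff_integrableOn_Ioc_of_le
          (by norm_num : (0:ℝ) ≤ 1)).mp
          ((intervalIntegrable_rpow' (by linarith)).const_mul a)
      apply Integrable.mono' hdom
      · apply AEStronglyMeasurable.mul
        · exact (hhcont.measurable.comp (by measurability)).aestronglyMeasurable
        · exact ((measurable_const.mul (by measurability))).aestronglyMeasurable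
      · rw [uIcc_of_le (by norm_num : (0:ℝ) ≤ 1)]
        rw [ae_restrict_iff' measurableSet_Icc]
        filter_upwards with x hx
        have hx0 : 0 ≤ x := hx.1
        have hnn : 0 ≤ a * x ^ (a - 1) := by
          apply mul_nonneg ha.le (Real.rpow_nonneg hx0 _)
        rw [Real.norm_eq_abs, abs_mul, abs_of_nonneg hnn]
        calc |(h ∘ fun x : ℝ => x ^ (a:ℝ)) x| * (a * x ^ (a-1))
            ≤ 1 * (a * x ^ (a-1)) := by
              apply mul_le_mul_of_nonneg_right _ hnn
              apply hhbd
              apply himg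
              exact ⟨x, by rw [uIcc_of_le (by norm_num : (0:ℝ) ≤ 1)]; exact hx, rfl⟩
        _ = a * x ^ (a - 1) := one_mul _
  rw [step2]
  -- step 3 : identify integrand with beta integrand
  have step3 : ∫ x in (0:ℝ)..1, (h ∘ fun x : ℝ => x ^ (a:ℝ)) x * (a * x ^ (a - 1))
      = a * ∫ x in (0:ℝ)..1, x ^ (a - 1) * (1 - x) ^ N := by
    rw [← intervalIntegral.integral_const_mul]
    apply intervalIntegral.integral_congr
    intro x hx
    rw [uIcc_of_le (by norm_num : (0:ℝ) ≤ 1)] at hx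
    have hx0 : 0 ≤ x := hx.1
    have hkey : Real.sqrt (x ^ (a:ℝ)) ^ d = x := by
      rw [Real.sqrt_eq_rpow,
        ← Real.rpow_natCast ((x ^ (a:ℝ)) ^ ((1:ℝ)/2)) d,
        ← Real.rpow_mul (Real.rpow_nonneg hx0 a), ← Real.rpow_mul hx0,
        show a * ((1:ℝ)/2 * (d:ℝ)) = 1 by rw [ha_def]; field_simp]
      exact Real.rpow_one x
    show h (x ^ (a:ℝ)) * (a * x ^ (a - 1)) = a * (x ^ (a-1) * (1 - x) ^ N)
    rw [hh_def]
    simp only []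
    rw [hkey]
    ring
  rw [step3, betaAux N a ha]
  have e2 : ∏ k ∈ Finset.range (N + 1), (a + k)
      = a * ∏ k ∈ Finset.range N, (a + (k + 1)) := by
    rw [Finset.prod_range_succ']
    simp only [Nat.cast_zero, add_zero]
    rw [mul_comm]
    congr 1
    exact Finset.prod_congr rfl fun k _ => by push_cast; ring
  rw [e2]
  have hP : (0:ℝ) < ∏ k ∈ Finset.range N, (a + (k + 1)) :=
    Finset.prod_pos fun k _ => by positivity
  field_simp

/-- Best-of-`N` sampling lower bound: in the setting of the best-of-`N`
proposition, `E[r* - r(ẑ)] ≥ (μR²/2) Γ(1 + 2/d) (N+2)^{-2/d}` for all `d ≥ 1`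
and `N ≥ 1`. -/
theorem stmt_16 {d : ℕ} (hd : 1 ≤ d) (m R rstar : ℝ) (hm : 0 < m) (hR : 0 < R)
    (zstar : EuclideanSpace ℝ (Fin d)) (r : EuclideanSpace ℝ (Fin d) → ℝ)
    (hr : ∀ z, r z = rstar - m / 2 * ‖z - zstar‖ ^ 2)
    (N : ℕ) (hN : 1 ≤ N)
    {Ω : Type*} [MeasurableSpace Ω] (μ : Measure Ω) [IsProbabilityMeasure μ]
    (X : Fin N → Ω → EuclideanSpace ℝ (Fin d))
    (hmeas : ∀ i, Measurable (X i))
    (hindep : ProbabilityTheory.iIndepFun X μ)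
    (hlaw : ∀ i, Measure.map (X i) μ =
      (volume (Metric.closedBall zstar R))⁻¹ •
        volume.restrict (Metric.closedBall zstar R)) :
    m * R ^ 2 / 2 * (Real.Gamma (1 + 2 / d) * ((N : ℝ) + 2) ^ (-(2 / (d : ℝ)))) ≤
      ∫ ω, (rstar - ⨆ i, r (X i ω)) ∂μ := by
  haveI : Nonempty (Fin N) := ⟨⟨0, hN⟩⟩
  have hYm : ∀ i : Fin N, Measurable fun ω => ‖X i ω - zstar‖ ^ 2 :=
    fun i => (((hmeas i).sub measurable_const).norm).pow_const 2
  have hZm : Measurable fun ω => ⨅ i, ‖X i ω - zstar‖ ^ 2 := Measurable.iInf hYm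
  have hZnn : ∀ ω, 0 ≤ ⨅ i, ‖X i ω - zstar‖ ^ 2 :=
    fun ω => le_ciInf fun i => by positivity
  -- pointwise identity
  have hptw : ∀ ω, rstar - ⨆ i, r (X i ω)
      = m / 2 * ⨅ i, ‖X i ω - zstar‖ ^ 2 := by
    intro ω
    obtain ⟨i0, hi0⟩ := Finite.exists_min fun i => ‖X i ω - zstar‖ ^ 2
    have hinf : (⨅ i, ‖X i ω - zstar‖ ^ 2) = ‖X i0 ω - zstar‖ ^ 2 :=
      le_antisymm (ciInf_le (Finite.bddBelow_range _) i0) (le_ciInf hi0)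
    have hsup : (⨆ i, r (X i ω)) = rstar - m / 2 * ‖X i0 ω - zstar‖ ^ 2 := by
      apply le_antisymm
      · apply ciSup_le
        intro i
        rw [hr]
        have h1 := hi0 i
        nlinarith
      · have h2 : r (X i0 ω) ≤ ⨆ i, r (X i ω) :=
          le_ciSup (Finite.bddAbove_range fun i => r (X i ω)) i0
        rw [hr] at h2
        exact h2
    rw [hsup, hinf]
    ring
  simp only [hptw]
  rw [MeasureTheory.integral_const_mul]
  have hq : 0 ≤ Real.Gamma (1 + 2 / d) * ((N : ℝ) + 2) ^ (-(2 / (d : ℝ))) := by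
    apply mul_nonneg
    · exact (Real.Gamma_pos_of_pos (by positivity)).le
    · exact (Real.rpow_pos_of_pos (by positivity) _).le
  suffices hsuf : R ^ 2 * (Real.Gamma (1 + 2 / d) * ((N : ℝ) + 2) ^ (-(2 / (d : ℝ))))
      ≤ ∫ ω, (⨅ i, ‖X i ω - zstar‖ ^ 2) ∂μ by
    calc m * R ^ 2 / 2 * (Real.Gamma (1 + 2 / d) * ((N : ℝ) + 2) ^ (-(2 / (d : ℝ))))
        = m / 2 * (R ^ 2 * (Real.Gamma (1 + 2 / d) * ((N:ℝ) + 2) ^ (-(2 / (d:ℝ))))) := by ring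
      _ ≤ m / 2 * ∫ ω, (⨅ i, ‖X i ω - zstar‖ ^ 2) ∂μ := by
          apply mul_le_mul_of_nonneg_left hsuf (by positivity)
  -- ae boundedness
  have hae : ∀ᵐ ω ∂μ, X ⟨0, hN⟩ ω ∈ Metric.closedBall zstar R := by
    have h0 : μ (X ⟨0, hN⟩ ⁻¹' (Metric.closedBall zstar R)ᶜ) = 0 := by
      rw [← Measure.map_apply (hmeas _) measurableSet_closedBall.compl, hlaw _,
        Measure.smul_apply, smul_eq_mul,
        Measure.restrict_apply measurableSet_closedBall.compl,
        Set.compl_inter_self, measure_empty, mul_zero]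
    rw [ae_iff]
    exact h0
  have hZbd : ∀ᵐ ω ∂μ, (⨅ i, ‖X i ω - zstar‖ ^ 2) ≤ R ^ 2 := by
    filter_upwards [hae] with ω hω
    calc (⨅ i, ‖X i ω - zstar‖ ^ 2) ≤ ‖X ⟨0, hN⟩ ω - zstar‖ ^ 2 :=
          ciInf_le (Finite.bddBelow_range _) _
      _ ≤ R ^ 2 := by
          have h1 := mem_closedBall_iff_norm.mp hω
          nlinarith [norm_nonneg (X ⟨0, hN⟩ ω - zstar)]
  have hZint : Integrable (fun ω => ⨅ i, ‖X i ω - zstar‖ ^ 2) μ := by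
    apply Integrable.mono' (integrable_const (R ^ 2)) hZm.aestronglyMeasurable
    filter_upwards [hZbd] with ω h1
    rw [Real.norm_eq_abs, abs_of_nonneg (hZnn ω)]
    exact h1
  have hfin : ∫⁻ ω, ENNReal.ofReal (⨅ i, ‖X i ω - zstar‖ ^ 2) ∂μ ≠ ⊤ :=
    hZint.lintegral_lt_top.ne
  rw [integral_eq_lintegral_of_nonneg_ae (Filter.Eventually.of_forall hZnn)
    hZm.aestronglyMeasurable]
  rw [← ENNReal.ofReal_le_iff_le_toReal hfin]
  rw [lintegral_eq_lintegral_meas_lt μ (Filter.Eventually.of_forall hZnn) hZm.aemeasurable]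
  -- the tail via the survival function
  have hgcont : Continuous fun t => (1 - (Real.sqrt t / R) ^ d) ^ N :=
    (continuous_const.sub ((Real.continuous_sqrt.div_const R).pow d)).pow N
  have hgnn : ∀ t ∈ Ioc (0:ℝ) (R^2), 0 ≤ (1 - (Real.sqrt t / R) ^ d) ^ N := by
    intro t ht
    apply pow_nonneg
    have : (Real.sqrt t / R) ^ d ≤ 1 := by
      apply pow_le_one₀ (by positivity)
      rw [div_le_one hR]
      calc Real.sqrt t ≤ Real.sqrt (R ^ 2) := Real.sqrt_le_sqrt ht.2
        _ = R := Real.sqrt_sq hR.le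
    linarith
  calc ENNReal.ofReal (R ^ 2 * (Real.Gamma (1 + 2 / d) * ((N : ℝ) + 2) ^ (-(2 / (d : ℝ)))))
      ≤ ENNReal.ofReal (∫ t in Ioc (0:ℝ) (R^2), (1 - (Real.sqrt t / R) ^ d) ^ N) := by
        apply ENNReal.ofReal_le_ofReal
        rw [← intervalIntegral.integral_of_le (by positivity : (0:ℝ) ≤ R^2),
          intCompute hd hR N]
        have := keyIneq hd N
        nlinarith [sq_nonneg R]
    _ = ∫⁻ t in Ioc (0:ℝ) (R^2), ENNReal.ofReal ((1 - (Real.sqrt t / R) ^ d) ^ N) := by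
        apply ofReal_integral_eq_lintegral_ofReal
        · exact hgcont.integrableOn_Ioc
        · rw [Filter.EventuallyLE, ae_restrict_iff' measurableSet_Ioc]
          filter_upwards with t ht
          exact hgnn t ht
    _ = ∫⁻ t in Ioc (0:ℝ) (R^2), μ {ω | t < ⨅ i, ‖X i ω - zstar‖ ^ 2} := by
        apply setLIntegral_congr_fun measurableSet_Ioc
        intro t ht
        exact (survival hd R hR zstar N hN μ X hmeas hindep hlaw t ht).symm
    _ ≤ ∫⁻ t in Ioi (0:ℝ), μ {ω | t < ⨅ i, ‖X i ω - zstar‖ ^ 2} :=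
        lintegral_mono_set Ioc_subset_Ioi_self
end
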